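/- If R is Gaussian with mean μ = π/(2√2) + kπ/√2 for some integer k and variance σ² = (1/4)ln 3, then E[cos(√2 R)] = 0 and E[cos(2√2 R)] = −1/3; consequently P_3 has uniform average mixing under R. -/

import Mathlib

/-!
For `R ~ N(m, v)` the real part of the characteristic function gives
`E[cos (w R)] = cos (w m) · exp (-v w² / 2)`. With the given mean, `√2 m` is an odd multiple of
`π / 2` and `2√2 m` an odd multiple of `π`, while `v (2√2)² / 2 = ln 3`; so the two averages are
`0` and `-1/3`, and the average mixing matrix is then a finite computation with the spectral
projections.
-/

open Matrix MeasureTheory ProbabilityTheory Real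
open scoped Matrix NNReal

noncomputable section

/-- Spectral projection of `A(P₃)` for the eigenvalue `√2`. -/
def Ep : Matrix (Fin 3) (Fin 3) ℝ :=
  (1 / 4 : ℝ) • !![1, Real.sqrt 2, 1; Real.sqrt 2, 2, Real.sqrt 2; 1, Real.sqrt 2, 1]

/-- Spectral projection of `A(P₃)` for the eigenvalue `0`. -/
def Ez : Matrix (Fin 3) (Fin 3) ℝ :=
  (1 / 2 : ℝ) • !![1, 0, -1; 0, 0, 0; -1, 0, 1]

/-- Spectral projection of `A(P₃)` for the eigenvalue `-√2`. -/
def Em : Matrix (Fin 3) (Fin 3) ℝ :=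
  (1 / 4 : ℝ) • !![1, -Real.sqrt 2, 1; -Real.sqrt 2, 2, -Real.sqrt 2; 1, -Real.sqrt 2, 1]

/-- The average mixing matrix of `P₃` under a sampling distribution `μ`. -/
def ammP3 (μ : Measure ℝ) : Matrix (Fin 3) (Fin 3) ℝ :=
  Ep ⊙ Ep + Ez ⊙ Ez + Em ⊙ Em +
    (2 * ∫ t, Real.cos (Real.sqrt 2 * t) ∂μ) • (Ep ⊙ Ez) +
    (2 * ∫ t, Real.cos (Real.sqrt 2 * t) ∂μ) • (Ez ⊙ Em) +
    (2 * ∫ t, Real.cos (2 * Real.sqrt 2 * t) ∂μ) • (Ep ⊙ Em)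

section CharFun

variable {μ : Measure ℝ} [IsFiniteMeasure μ]

lemma integral_cos_mul_eq_re_charFun (w : ℝ) :
    ∫ t, Real.cos (w * t) ∂μ = (charFun μ w).re := by
  have hint : Integrable (fun t : ℝ => Complex.exp (w * t * Complex.I)) μ :=
    (integrable_const (1 : ℝ)).mono (by fun_prop)
      (.of_forall fun t => by simp [← Complex.ofReal_mul, Complex.norm_exp_ofReal_mul_I])
  rw [charFun_apply_real, ← RCLike.re_to_complex, ← integral_re hint]
  simp_rw [RCLike.re_to_complex, ← Complex.ofReal_mul, Complex.exp_ofReal_mul_I_re]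

end CharFun

lemma integral_cos_mul_gaussianReal (m : ℝ) (v : ℝ≥0) (w : ℝ) :
    ∫ t, Real.cos (w * t) ∂(gaussianReal m v) =
      Real.cos (w * m) * Real.exp (-(v * w ^ 2 / 2)) := by
  have hreal : (v : ℂ) * (w : ℂ) ^ 2 / 2 = ((v * w ^ 2 / 2 : ℝ) : ℂ) := by push_cast; ring
  rw [integral_cos_mul_eq_re_charFun, charFun_gaussianReal, hreal, sub_eq_add_neg, Complex.exp_add,
    ← Complex.ofReal_mul, ← Complex.ofReal_neg, ← Complex.ofReal_exp, Complex.re_mul_ofReal,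
    Complex.exp_ofReal_mul_I_re]

lemma ammP3_eq_of_integral_cos {μ : Measure ℝ} (h₁ : ∫ t, Real.cos (Real.sqrt 2 * t) ∂μ = 0)
    (h₂ : ∫ t, Real.cos (2 * Real.sqrt 2 * t) ∂μ = -(1 / 3)) :
    ammP3 μ = (1 / 3 : ℝ) • Matrix.of fun _ _ => (1 : ℝ) := by
  have hsq : Real.sqrt 2 * Real.sqrt 2 = 2 := Real.mul_self_sqrt zero_le_two
  rw [ammP3, h₁, h₂]
  ext i j
  fin_cases i <;> fin_cases j <;>
    simp [Ep, Ez, Em, Matrix.hadamard_apply] <;>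
    nlinarith [hsq]

/-- if `R` is Gaussian with mean `μ = π/(2√2) + kπ/√2` (`k ∈ ℤ`) and
variance `σ² = (1/4) ln 3`, then `E[cos (√2 R)] = 0` and `E[cos (2√2 R)] = -1/3`;
consequently `P₃` has uniform average mixing under `R`. -/
theorem uniform_average_mixing_P3_gaussian (k : ℤ) :
    (∫ t, Real.cos (Real.sqrt 2 * t)
        ∂(gaussianReal (π / (2 * Real.sqrt 2) + k * π / Real.sqrt 2)
          (Real.toNNReal ((1 / 4) * Real.log 3)))) = 0 ∧
    (∫ t, Real.cos (2 * Real.sqrt 2 * t)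
        ∂(gaussianReal (π / (2 * Real.sqrt 2) + k * π / Real.sqrt 2)
          (Real.toNNReal ((1 / 4) * Real.log 3)))) = -(1 / 3) ∧
    ammP3 (gaussianReal (π / (2 * Real.sqrt 2) + k * π / Real.sqrt 2)
        (Real.toNNReal ((1 / 4) * Real.log 3))) =
      (1 / 3 : ℝ) • Matrix.of fun _ _ => (1 : ℝ) := by
  have hv : ((Real.toNNReal ((1 / 4) * Real.log 3) : ℝ≥0) : ℝ) = (1 / 4) * Real.log 3 :=
    Real.coe_toNNReal _ (by positivity)
  have hs : Real.sqrt 2 ≠ 0 := by positivity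
  have h₁ : ∫ t, Real.cos (Real.sqrt 2 * t)
      ∂(gaussianReal (π / (2 * Real.sqrt 2) + k * π / Real.sqrt 2)
        (Real.toNNReal ((1 / 4) * Real.log 3))) = 0 := by
    rw [integral_cos_mul_gaussianReal, Real.cos_eq_zero_iff.mpr ⟨k, by field_simp; ring⟩, zero_mul]
  have h₂ : ∫ t, Real.cos (2 * Real.sqrt 2 * t)
      ∂(gaussianReal (π / (2 * Real.sqrt 2) + k * π / Real.sqrt 2)
        (Real.toNNReal ((1 / 4) * Real.log 3))) = -(1 / 3) := by
    have hmean :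
        2 * Real.sqrt 2 * (π / (2 * Real.sqrt 2) + k * π / Real.sqrt 2) = k * (2 * π) + π := by
      field_simp; ring
    have hvar : (1 / 4) * Real.log 3 * (2 * Real.sqrt 2) ^ 2 / 2 = Real.log 3 := by
      rw [mul_pow, Real.sq_sqrt zero_le_two]; ring
    rw [integral_cos_mul_gaussianReal, hmean, Real.cos_int_mul_two_pi_add_pi, hv, hvar,
      Real.exp_neg, Real.exp_log three_pos]
    norm_num
  exact ⟨h₁, h₂, ammP3_eq_of_integral_cos h₁ h₂⟩

end
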